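/- arXiv:2511.10273 — 7 statements merged into one kernel-verified Lean document; each statement's English description precedes it below -/
import Mathlib

section
/- Let Q be an O-compatible set of weighted local cores relative to α with total weight weight(Q) = Σ_{(w,R,K)∈Q} w. If weight(Q) ≥ v*, then every total assignment β refining α that satisfies F has objective value O(β) ≥ v*. -/
/-- Value of a literal (variable, polarity) under a total Boolean assignment. -/
def evalLit {V : Type*} (β : V → Bool) (l : V × Bool) : Bool :=
  if l.2 then β l.1 else !(β l.1)

/-- Negation of a literal. -/
def negLit {V : Type*} (l : V × Bool) : V × Bool := (l.1, !l.2)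

/-- Objective value `O(β) = Σ_{ℓ ∈ obj, β ⊨ ℓ} w(ℓ)`. -/
def objVal {V : Type*} (β : V → Bool) (obj : Finset (V × Bool)) (w : V × Bool → ℕ) : ℕ :=
  ∑ l ∈ obj, if evalLit β l then w l else 0

/-!
Every core `(w, R, K)` is violated by `β` only through `K`: since `β` satisfies `F` and `R ⊆ α`,
some `¬ℓ ∈ K` is false under `β`, i.e. some objective literal `ℓ` with `¬ℓ ∈ K` is true under `β`.
Charging the weight of each core to all such literals counts every core at least once, and
`O`-compatibility says that no literal `ℓ` is charged more than its own weight, so the total weight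
of `Q` is at most the sum of the weights of the objective literals true under `β`, which is `O(β)`.
-/

open Finset

theorem evalLit_negLit {V : Type*} (β : V → Bool) (l : V × Bool) :
    evalLit β (negLit l) = !evalLit β l := by
  obtain ⟨_, _ | _⟩ := l <;> simp [evalLit, negLit]

theorem objVal_eq_sum_filter {V : Type*} (β : V → Bool) (obj : Finset (V × Bool))
    (w : V × Bool → ℕ) : objVal β obj w = ∑ l ∈ obj with evalLit β l, w l :=
  (sum_filter _ _).symm

theorem Finset.sum_le_sum_of_forall_exists_rel {ι κ M : Type*} [AddCommMonoid M] [PartialOrder M]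
    [CanonicallyOrderedAdd M] [IsOrderedAddMonoid M] (Q : Finset ι) (S : Finset κ)
    (r : ι → κ → Prop) [∀ i k, Decidable (r i k)] (c : ι → M) (w : κ → M)
    (hcover : ∀ q ∈ Q, ∃ s ∈ S, r q s) (hcap : ∀ s ∈ S, ∑ q ∈ Q with r q s, c q ≤ w s) :
    ∑ q ∈ Q, c q ≤ ∑ s ∈ S, w s :=
  calc ∑ q ∈ Q, c q
      ≤ ∑ q ∈ Q, ∑ s ∈ S with r q s, c q := sum_le_sum fun q hq => by
        obtain ⟨s, hs, hqs⟩ := hcover q hq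
        exact single_le_sum (f := fun _ => c q) (fun _ _ => zero_le) (mem_filter.2 ⟨hs, hqs⟩)
    _ = ∑ s ∈ S, ∑ q ∈ Q with r q s, c q :=
        sum_comm' fun _ _ => by simp only [mem_filter]; tauto
    _ ≤ ∑ s ∈ S, w s := sum_le_sum hcap

theorem exists_true_of_negLit_mem_core {V : Type*} {F : (V → Bool) → Prop} {α : Set (V × Bool)}
    {obj R K : Finset (V × Bool)} (hR : ∀ l ∈ R, l ∈ α) (hK : ∀ l ∈ K, ∃ b ∈ obj, l = negLit b)
    (hunsat : ∀ γ : V → Bool, F γ → (∀ l ∈ R, evalLit γ l = true) →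
      (∀ l ∈ K, evalLit γ l = true) → False)
    {β : V → Bool} (hβα : ∀ l ∈ α, evalLit β l = true) (hβF : F β) :
    ∃ b ∈ obj, evalLit β b = true ∧ negLit b ∈ K := by
  by_contra! h
  refine hunsat β hβF (fun l hl => hβα l (hR l hl)) fun l hl => ?_
  obtain ⟨b, hb, rfl⟩ := hK l hl
  simpa [evalLit_negLit] using mt (h b hb) (not_not.2 hl)

theorem stmt1_general {V : Type*} [DecidableEq V] (F : (V → Bool) → Prop)
    (α : Set (V × Bool)) (obj : Finset (V × Bool)) (w : V × Bool → ℕ)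
    (Q : Finset (ℕ × Finset (V × Bool) × Finset (V × Bool)))
    (hcore : ∀ q ∈ Q, (∀ l ∈ q.2.1, l ∈ α) ∧
      (∀ l ∈ q.2.2, ∃ b ∈ obj, l = negLit b) ∧
      (∀ γ : V → Bool, F γ → (∀ l ∈ q.2.1, evalLit γ l = true) →
        (∀ l ∈ q.2.2, evalLit γ l = true) → False))
    (hcompat : ∀ l ∈ obj,
      ∑ q ∈ Q.filter (fun q => negLit l ∈ q.2.2), q.1 ≤ w l)
    (vstar : ℤ)
    (hweight : ((∑ q ∈ Q, q.1 : ℕ) : ℤ) ≥ vstar) :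
    ∀ β : V → Bool, (∀ l ∈ α, evalLit β l = true) → F β →
      ((objVal β obj w : ℕ) : ℤ) ≥ vstar := by
  intro β hβα hβF
  have hcover : ∀ q ∈ Q, ∃ b ∈ obj.filter (evalLit β ·), negLit b ∈ q.2.2 := by
    intro q hq
    obtain ⟨hR, hK, hunsat⟩ := hcore q hq
    obtain ⟨b, hb, hβb, hbK⟩ := exists_true_of_negLit_mem_core hR hK hunsat hβα hβF
    exact ⟨b, mem_filter.2 ⟨hb, hβb⟩, hbK⟩
  have hQ : ∑ q ∈ Q, q.1 ≤ objVal β obj w := by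
    rw [objVal_eq_sum_filter]
    exact sum_le_sum_of_forall_exists_rel Q _ _ _ w hcover
      fun b hb => hcompat b (mem_filter.1 hb).1
  exact hweight.trans (by exact_mod_cast hQ)

/-- If `Q` is an `O`-compatible set of weighted local cores relative to `α` with total
weight at least `v*`, then every total assignment `β` refining `α` that satisfies `F`
has objective value at least `v*`. Cores are triples `(w, R, K)`. -/
theorem stmt1 {V : Type*} [DecidableEq V] (F : (V → Bool) → Prop)
    (α : Set (V × Bool)) (obj : Finset (V × Bool)) (w : V × Bool → ℕ)
    (hw : ∀ l ∈ obj, 0 < w l)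
    (Q : Finset (ℕ × Finset (V × Bool) × Finset (V × Bool)))
    (hcore : ∀ q ∈ Q, (∀ l ∈ q.2.1, l ∈ α) ∧
      (∀ l ∈ q.2.2, ∃ b ∈ obj, l = negLit b) ∧
      (∀ γ : V → Bool, F γ → (∀ l ∈ q.2.1, evalLit γ l = true) →
        (∀ l ∈ q.2.2, evalLit γ l = true) → False))
    (hcompat : ∀ l ∈ obj,
      ∑ q ∈ Q.filter (fun q => negLit l ∈ q.2.2), q.1 ≤ w l)
    (vstar : ℤ)
    (hweight : ((∑ q ∈ Q, q.1 : ℕ) : ℤ) ≥ vstar) :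
    ∀ β : V → Bool, (∀ l ∈ α, evalLit β l = true) → F β →
      ((objVal β obj w : ℕ) : ℤ) ≥ vstar :=
  stmt1_general F α obj w Q hcore hcompat vstar hweight
end

section
/- Division soundness of cutting planes: if a 0-1 assignment satisfies the normalized PB constraint Σᵢ wᵢ ℓᵢ ≥ A with all wᵢ, A nonnegative integers, and c is a positive integer, then it also satisfies Σᵢ ⌈wᵢ/c⌉ ℓᵢ ≥ ⌈A/c⌉. -/
theorem Finset.sum_mul_div_le_sum_ceil_div_mul {ι K : Type*} [Field K] [LinearOrder K]
    [IsStrictOrderedRing K] [FloorRing K] (s : Finset ι) (w ℓ : ι → K) (c : K)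
    (hℓ : ∀ i ∈ s, 0 ≤ ℓ i) :
    (∑ i ∈ s, w i * ℓ i) / c ≤ ∑ i ∈ s, (⌈w i / c⌉ : K) * ℓ i := by
  rw [Finset.sum_div]
  gcongr with i hi
  rw [mul_div_right_comm]
  exact mul_le_mul_of_nonneg_right (Int.le_ceil _) (hℓ i hi)

theorem stmt6_general {ι : Type*} (s : Finset ι) (w : ι → ℕ) (A c : ℕ)
    (ℓ : ι → ℕ)
    (h : (A : ℤ) ≤ ∑ i ∈ s, (w i : ℤ) * ℓ i) :
    ⌈(A : ℚ) / c⌉ ≤ ∑ i ∈ s, ⌈(w i : ℚ) / c⌉ * (ℓ i : ℤ) := by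
  rw [Int.ceil_le]
  have hA : (A : ℚ) ≤ ∑ i ∈ s, (w i : ℚ) * ℓ i := by exact_mod_cast h
  calc (A : ℚ) / c ≤ (∑ i ∈ s, (w i : ℚ) * ℓ i) / c := by gcongr
    _ ≤ ∑ i ∈ s, (⌈(w i : ℚ) / c⌉ : ℚ) * ℓ i :=
      s.sum_mul_div_le_sum_ceil_div_mul _ _ _ fun i _ ↦ (ℓ i).cast_nonneg
    _ = _ := by push_cast; rfl

/-- Division soundness of cutting planes: if a 0-1 assignment (literal values `ℓ i ∈ {0,1}`)
satisfies `Σᵢ wᵢ ℓᵢ ≥ A` with nonnegative integer coefficients, and `c > 0`, then it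
satisfies `Σᵢ ⌈wᵢ/c⌉ ℓᵢ ≥ ⌈A/c⌉`. -/
theorem stmt6 {ι : Type*} (s : Finset ι) (w : ι → ℕ) (A c : ℕ) (hc : 0 < c)
    (ℓ : ι → ℕ) (hℓ : ∀ i, ℓ i ≤ 1)
    (h : (A : ℤ) ≤ ∑ i ∈ s, (w i : ℤ) * ℓ i) :
    ⌈(A : ℚ) / c⌉ ≤ ∑ i ∈ s, ⌈(w i : ℚ) / c⌉ * (ℓ i : ℤ) :=
  stmt6_general s w A c ℓ h
end

section
/- Saturation soundness: if a 0-1 assignment satisfies the normalized PB constraint Σᵢ aᵢ ℓᵢ ≥ A with nonnegative integer coefficients aᵢ and degree A, then it also satisfies Σᵢ min(aᵢ, A) ℓᵢ ≥ A. -/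
/-! Truncation `x ↦ min x A` is subadditive on a canonically ordered monoid and commutes with
multiplication by a 0-1 value, so `A = min (∑ aᵢ ℓᵢ) A ≤ ∑ min (aᵢ ℓᵢ) A = ∑ min aᵢ A · ℓᵢ`. -/

section CanonicallyOrdered

variable {α : Type*} [AddCommMonoid α] [LinearOrder α] [CanonicallyOrderedAdd α]

theorem min_add_le_min_add_min (x y A : α) : min (x + y) A ≤ min x A + min y A := by
  rcases le_total A x with hx | hx
  · simp [min_eq_right hx]
  rcases le_total A y with hy | hy
  · simp [min_eq_right hy]
  · simp [min_eq_left hx, min_eq_left hy]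

theorem Finset.min_sum_le_sum_min [IsOrderedAddMonoid α] {ι : Type*} (s : Finset ι)
    (f : ι → α) (A : α) : min (∑ i ∈ s, f i) A ≤ ∑ i ∈ s, min (f i) A :=
  Finset.le_sum_of_subadditive (min · A) (by simp) (min_add_le_min_add_min · · A) s f

end CanonicallyOrdered

theorem min_mul_of_le_one {a A ℓ : ℕ} (hℓ : ℓ ≤ 1) : min a A * ℓ = min (a * ℓ) A := by
  interval_cases ℓ <;> simp

/-- Saturation soundness: if a 0-1 assignment satisfies `Σᵢ aᵢ ℓᵢ ≥ A` with nonnegative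
integer coefficients and degree, then it satisfies `Σᵢ min(aᵢ, A) ℓᵢ ≥ A`. -/
theorem stmt7 {ι : Type*} (s : Finset ι) (a : ι → ℕ) (A : ℕ)
    (ℓ : ι → ℕ) (hℓ : ∀ i, ℓ i ≤ 1)
    (h : A ≤ ∑ i ∈ s, a i * ℓ i) :
    A ≤ ∑ i ∈ s, min (a i) A * ℓ i :=
  calc A = min (∑ i ∈ s, a i * ℓ i) A := (min_eq_right h).symm
    _ ≤ ∑ i ∈ s, min (a i * ℓ i) A := s.min_sum_le_sum_min _ A
    _ = ∑ i ∈ s, min (a i) A * ℓ i :=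
      Finset.sum_congr rfl fun i _ => (min_mul_of_le_one (hℓ i)).symm
end

section
/- Degree interval combination: suppose for all integers A ∈ [l₁, u₁] the constraint Σ_{i>k} wᵢ bᵢ ≤ A is equivalent (over 0-1 assignments) to Σ_{i>k} wᵢ bᵢ ≤ u₁, and for all A ∈ [l₀, u₀] the constraint Σ_{i>k} wᵢ bᵢ ≤ A is equivalent to Σ_{i>k} wᵢ bᵢ ≤ u₀. Then for all A ∈ [max(l₁ + w_k, l₀), min(u₁ + w_k, u₀)], the constraint Σ_{i≥k} wᵢ bᵢ ≤ A is equivalent to Σ_{i≥k} wᵢ bᵢ ≤ min(u₁ + w_k, u₀), where the Boolean literal b_k has weight w_k ≥ 0. -/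
/-!
For a fixed assignment, `s ≤ A ↔ s ≤ u` holds for every `A ∈ [l, u]` exactly when the value `s`
avoids `(l, u]`. The full sum is either the tail sum (when `b_k = 0`) or the tail sum shifted by
`w_k` (when `b_k = 1`), so it avoids `(l₀, u₀]` resp. `(l₁ + w_k, u₁ + w_k]`, and hence their
intersection `(max (l₁ + w_k) l₀, min (u₁ + w_k) u₀]`.
-/

open Finset

theorem forall_le_iff_le_iff_notMem_Ioc {α : Type*} [LinearOrder α] {s l u : α} :
    (∀ A, l ≤ A → A ≤ u → (s ≤ A ↔ s ≤ u)) ↔ s ∉ Set.Ioc l u := by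
  constructor
  · rintro h ⟨hls, hsu⟩
    exact not_le_of_gt hls ((h l le_rfl (hls.le.trans hsu)).2 hsu)
  · intro hs A hlA hAu
    exact ⟨fun hsA => hsA.trans hAu, fun hsu => (not_lt.1 fun hls => hs ⟨hls, hsu⟩).trans hlA⟩

theorem notMem_Ioc_max_min_of_eq_or_eq_add {α : Type*} [AddCommGroup α] [LinearOrder α]
    [IsOrderedAddMonoid α] {s t w l₀ u₀ l₁ u₁ : α} (h₁ : s ∉ Set.Ioc l₁ u₁)
    (h₀ : s ∉ Set.Ioc l₀ u₀) (ht : t = s ∨ t = s + w) :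
    t ∉ Set.Ioc (max (l₁ + w) l₀) (min (u₁ + w) u₀) := by
  rw [← Set.Ioc_inter_Ioc]
  rcases ht with rfl | rfl
  · exact fun h => h₀ h.2
  · exact fun h => h₁ (by simpa [Set.add_mem_Ioc_iff_left] using h.1)

theorem sum_Icc_mul_eq_or_eq_add {k n : ℕ} (w β : ℕ → ℕ) (hβ : β k ≤ 1) :
    ∑ i ∈ Icc k n, w i * β i = ∑ i ∈ Icc (k + 1) n, w i * β i ∨
      ∑ i ∈ Icc k n, w i * β i = ∑ i ∈ Icc (k + 1) n, w i * β i + w k := by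
  rcases le_or_gt k n with hk | hk
  · rw [← insert_Icc_add_one_left_eq_Icc hk, sum_insert (by simp), add_comm]
    rcases Nat.le_one_iff_eq_zero_or_eq_one.1 hβ with h | h <;> simp [h]
  · simp [Icc_eq_empty_of_lt hk, Icc_eq_empty_of_lt (hk.trans (Nat.lt_succ_self k))]

/-- Degree interval combination for BDD construction: if `[l₁,u₁]` and `[l₀,u₀]` are degree
intervals for `Σ_{i>k} wᵢ bᵢ`, then `[max(l₁+w_k, l₀), min(u₁+w_k, u₀)]` is a degree
interval for `Σ_{i≥k} wᵢ bᵢ`. Assignments `β` take values in `{0,1}`. -/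
theorem stmt8 (n k : ℕ) (w : ℕ → ℕ) (l₀ u₀ l₁ u₁ : ℤ)
    (h₁ : ∀ A : ℤ, l₁ ≤ A → A ≤ u₁ → ∀ β : ℕ → ℕ, (∀ i, β i ≤ 1) →
      (((∑ i ∈ Finset.Icc (k+1) n, w i * β i : ℕ) : ℤ) ≤ A ↔
        ((∑ i ∈ Finset.Icc (k+1) n, w i * β i : ℕ) : ℤ) ≤ u₁))
    (h₀ : ∀ A : ℤ, l₀ ≤ A → A ≤ u₀ → ∀ β : ℕ → ℕ, (∀ i, β i ≤ 1) →
      (((∑ i ∈ Finset.Icc (k+1) n, w i * β i : ℕ) : ℤ) ≤ A ↔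
        ((∑ i ∈ Finset.Icc (k+1) n, w i * β i : ℕ) : ℤ) ≤ u₀)) :
    ∀ A : ℤ, max (l₁ + (w k : ℤ)) l₀ ≤ A → A ≤ min (u₁ + (w k : ℤ)) u₀ →
      ∀ β : ℕ → ℕ, (∀ i, β i ≤ 1) →
      (((∑ i ∈ Finset.Icc k n, w i * β i : ℕ) : ℤ) ≤ A ↔
        ((∑ i ∈ Finset.Icc k n, w i * β i : ℕ) : ℤ) ≤ min (u₁ + (w k : ℤ)) u₀) := by
  intro A hlA hAu β hβ
  have tail₁ := forall_le_iff_le_iff_notMem_Ioc.1 fun A hl hu => h₁ A hl hu β hβ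
  have tail₀ := forall_le_iff_le_iff_notMem_Ioc.1 fun A hl hu => h₀ A hl hu β hβ
  have split : ((∑ i ∈ Icc k n, w i * β i : ℕ) : ℤ) = (∑ i ∈ Icc (k + 1) n, w i * β i : ℕ) ∨
      ((∑ i ∈ Icc k n, w i * β i : ℕ) : ℤ) = (∑ i ∈ Icc (k + 1) n, w i * β i : ℕ) + w k := by
    rcases sum_Icc_mul_eq_or_eq_add (n := n) w β (hβ k) with h | h <;> simp [h]
  exact forall_le_iff_le_iff_notMem_Ioc.2
    (notMem_Ioc_max_min_of_eq_or_eq_add tail₁ tail₀ split) A hlA hAu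
end

section
/- BDD node equivalence: let n = (k,l,u) be an internal BDD node labeled b_k with true-child interval [l_t,u_t] and false-child interval [l_f,u_f] satisfying l = max(l_t + w_k, l_f), u = min(u_t + w_k, u_f), where [l_t,u_t] and [l_f,u_f] are degree intervals for S_{k+1} = Σ_{i>k} wᵢbᵢ. Then for every 0-1 assignment, S_k = Σ_{i≥k} wᵢbᵢ ≤ u implies S_k ≤ l; i.e., [l,u] is a degree interval for S_k. -/
/-!
A degree interval `[a, c]` for a value `s` just says that `s ∉ (a, c]`. Split `S_k` as
`w_k b_k + S_{k+1}`. If `b_k = 1`, then `S_k ≤ u ≤ u_t + w_k` gives `S_{k+1} ≤ u_t`, hence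
`S_{k+1} ≤ l_t` and `S_k ≤ l_t + w_k ≤ l`; if `b_k = 0` (or `k > n`), then `S_{k+1} ≤ u_f`
gives `S_k = S_{k+1} ≤ l_f ≤ l`.
-/

open Finset

theorem notMem_Ioc_of_forall_le_iff {α : Type*} [LinearOrder α] {s a c : α}
    (h : ∀ A, a ≤ A → A ≤ c → (s ≤ A ↔ s ≤ c)) : s ∉ Set.Ioc a c := fun ⟨has, hsc⟩ =>
  (h a le_rfl (has.le.trans hsc)).mpr hsc |>.not_gt has

theorem le_of_notMem_Ioc_of_le {α : Type*} [LinearOrder α] {s a c : α}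
    (h : s ∉ Set.Ioc a c) (hs : s ≤ c) : s ≤ a :=
  not_lt.mp fun has => h ⟨has, hs⟩

theorem le_max_of_le_min_of_notMem_Ioc {α : Type*} [LinearOrder α] [AddCommMonoid α]
    [IsOrderedCancelAddMonoid α] {s x w lt ut lf uf : α}
    (ht : s ∉ Set.Ioc lt ut) (hf : s ∉ Set.Ioc lf uf) (hx : x = s + w ∨ x = s)
    (hle : x ≤ min (ut + w) uf) : x ≤ max (lt + w) lf := by
  rcases hx with rfl | rfl
  · have hsut : s ≤ ut := le_of_add_le_add_right (hle.trans (min_le_left _ _))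
    exact (add_le_add_left (le_of_notMem_Ioc_of_le ht hsut) w).trans (le_max_left _ _)
  · exact (le_of_notMem_Ioc_of_le hf (hle.trans (min_le_right _ _))).trans (le_max_right _ _)

theorem sum_Icc_mul_eq_add_or_eq (w β : ℕ → ℕ) {k : ℕ} (n : ℕ) (hβ : β k ≤ 1) :
    ∑ i ∈ Icc k n, w i * β i = ∑ i ∈ Icc (k + 1) n, w i * β i + w k ∨
      ∑ i ∈ Icc k n, w i * β i = ∑ i ∈ Icc (k + 1) n, w i * β i := by
  rcases le_or_gt k n with hkn | hnk
  · rw [← add_sum_Ioc_eq_sum_Icc hkn, Icc_add_one_left_eq_Ioc, add_comm]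
    rcases Nat.le_one_iff_eq_zero_or_eq_one.mp hβ with h0 | h1
    · simp [h0]
    · simp [h1]
  · right
    rw [Icc_eq_empty (by omega), Icc_eq_empty (by omega)]

theorem stmt14_general (n k : ℕ) (w : ℕ → ℕ) (lt ut lf uf l u : ℤ)
    (hl : l = max (lt + (w k : ℤ)) lf) (hu : u = min (ut + (w k : ℤ)) uf)
    (ht : ∀ A : ℤ, lt ≤ A → A ≤ ut → ∀ β : ℕ → ℕ, (∀ i, β i ≤ 1) →
      (((∑ i ∈ Finset.Icc (k+1) n, w i * β i : ℕ) : ℤ) ≤ A ↔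
        ((∑ i ∈ Finset.Icc (k+1) n, w i * β i : ℕ) : ℤ) ≤ ut))
    (hf : ∀ A : ℤ, lf ≤ A → A ≤ uf → ∀ β : ℕ → ℕ, (∀ i, β i ≤ 1) →
      (((∑ i ∈ Finset.Icc (k+1) n, w i * β i : ℕ) : ℤ) ≤ A ↔
        ((∑ i ∈ Finset.Icc (k+1) n, w i * β i : ℕ) : ℤ) ≤ uf)) :
    ∀ β : ℕ → ℕ, (∀ i, β i ≤ 1) →
      ((∑ i ∈ Finset.Icc k n, w i * β i : ℕ) : ℤ) ≤ u →
      ((∑ i ∈ Finset.Icc k n, w i * β i : ℕ) : ℤ) ≤ l := by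
  intro β hβ hle
  subst hl hu
  set S : ℤ := ((∑ i ∈ Icc (k + 1) n, w i * β i : ℕ) : ℤ)
  have hsplit : ((∑ i ∈ Icc k n, w i * β i : ℕ) : ℤ) = S + w k ∨
      ((∑ i ∈ Icc k n, w i * β i : ℕ) : ℤ) = S := by
    rcases sum_Icc_mul_eq_add_or_eq w β n (hβ k) with h | h <;> simp [h, S]
  exact le_max_of_le_min_of_notMem_Ioc (notMem_Ioc_of_forall_le_iff (ht · · · β hβ))
    (notMem_Ioc_of_forall_le_iff (hf · · · β hβ)) hsplit hle

/-- BDD node equivalence: if `[l_t,u_t]` and `[l_f,u_f]` are degree intervals for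
`S_{k+1} = Σ_{i>k} wᵢ bᵢ`, and `l = max(l_t + w_k, l_f)`, `u = min(u_t + w_k, u_f)`,
then for every 0-1 assignment, `S_k ≤ u` implies `S_k ≤ l`, where `S_k = Σ_{i≥k} wᵢ bᵢ`. -/
theorem stmt14 (n k : ℕ) (w : ℕ → ℕ) (lt ut lf uf l u : ℤ)
    (hlt : lt ≤ ut) (hlf : lf ≤ uf)
    (hl : l = max (lt + (w k : ℤ)) lf) (hu : u = min (ut + (w k : ℤ)) uf)
    (ht : ∀ A : ℤ, lt ≤ A → A ≤ ut → ∀ β : ℕ → ℕ, (∀ i, β i ≤ 1) →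
      (((∑ i ∈ Finset.Icc (k+1) n, w i * β i : ℕ) : ℤ) ≤ A ↔
        ((∑ i ∈ Finset.Icc (k+1) n, w i * β i : ℕ) : ℤ) ≤ ut))
    (hf : ∀ A : ℤ, lf ≤ A → A ≤ uf → ∀ β : ℕ → ℕ, (∀ i, β i ≤ 1) →
      (((∑ i ∈ Finset.Icc (k+1) n, w i * β i : ℕ) : ℤ) ≤ A ↔
        ((∑ i ∈ Finset.Icc (k+1) n, w i * β i : ℕ) : ℤ) ≤ uf)) :
    ∀ β : ℕ → ℕ, (∀ i, β i ≤ 1) →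
      ((∑ i ∈ Finset.Icc k n, w i * β i : ℕ) : ℤ) ≤ u →
      ((∑ i ∈ Finset.Icc k n, w i * β i : ℕ) : ℤ) ≤ l :=
  stmt14_general n k w lt ut lf uf l u hl hu ht hf
end

section
/- Shift of degree interval across skipped variables: let n = (k,l,u) be a BDD node such that S_k ≤ u and S_{k'} ≤ u are equivalent Boolean functions over 0-1 assignments, where k' < k, S_j = Σ_{i≥j} wᵢbᵢ, and let l' = l + Σ_{i=k'}^{k−1} wᵢ. Then every assignment satisfying S_{k'} ≤ u also satisfies S_{k'} ≤ l', provided every assignment satisfying S_k ≤ u satisfies S_k ≤ l. -/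
open Finset

theorem Finset.sum_Icc_le_sum_Ico_add_sum_Icc {M : Type*} [AddCommMonoid M] [PartialOrder M]
    [CanonicallyOrderedAdd M] [IsOrderedAddMonoid M] (f : ℕ → M) (a b n : ℕ) :
    ∑ i ∈ Icc a n, f i ≤ ∑ i ∈ Ico a b, f i + ∑ i ∈ Icc b n, f i := by
  have hdisj : Disjoint (Ico a b) (Icc b n) :=
    disjoint_left.mpr fun i hi hj => by simp only [mem_Ico, mem_Icc] at hi hj; omega
  rw [← sum_union hdisj]
  exact sum_le_sum_of_subset fun i hi => by simp only [mem_Icc, mem_union, mem_Ico] at *; omega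

theorem weightedSum_Icc_le_sum_Ico_add (w β : ℕ → ℕ) (hβ : ∀ i, β i ≤ 1) (a b n : ℕ) :
    ∑ i ∈ Icc a n, w i * β i ≤ ∑ i ∈ Ico a b, w i + ∑ i ∈ Icc b n, w i * β i :=
  calc ∑ i ∈ Icc a n, w i * β i
      ≤ ∑ i ∈ Ico a b, w i * β i + ∑ i ∈ Icc b n, w i * β i :=
        sum_Icc_le_sum_Ico_add_sum_Icc _ a b n
    _ ≤ ∑ i ∈ Ico a b, w i + ∑ i ∈ Icc b n, w i * β i := by
        gcongr with i
        exact mul_le_of_le_one_right (Nat.zero_le _) (hβ i)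

theorem stmt15_general (n k k' : ℕ) (w : ℕ → ℕ) (l u l' : ℤ)
    (hl' : l' = l + ∑ i ∈ Finset.Ico k' k, (w i : ℤ))
    (hequiv : ∀ β : ℕ → ℕ, (∀ i, β i ≤ 1) →
      (((∑ i ∈ Finset.Icc k n, w i * β i : ℕ) : ℤ) ≤ u ↔
        ((∑ i ∈ Finset.Icc k' n, w i * β i : ℕ) : ℤ) ≤ u))
    (hdeg : ∀ β : ℕ → ℕ, (∀ i, β i ≤ 1) →
      ((∑ i ∈ Finset.Icc k n, w i * β i : ℕ) : ℤ) ≤ u →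
      ((∑ i ∈ Finset.Icc k n, w i * β i : ℕ) : ℤ) ≤ l) :
    ∀ β : ℕ → ℕ, (∀ i, β i ≤ 1) →
      ((∑ i ∈ Finset.Icc k' n, w i * β i : ℕ) : ℤ) ≤ u →
      ((∑ i ∈ Finset.Icc k' n, w i * β i : ℕ) : ℤ) ≤ l' := by
  intro β hβ hu
  have hk : ((∑ i ∈ Icc k n, w i * β i : ℕ) : ℤ) ≤ l := hdeg β hβ ((hequiv β hβ).mpr hu)
  have hsplit : ((∑ i ∈ Icc k' n, w i * β i : ℕ) : ℤ) ≤
      ∑ i ∈ Ico k' k, (w i : ℤ) + ((∑ i ∈ Icc k n, w i * β i : ℕ) : ℤ) := by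
    exact_mod_cast weightedSum_Icc_le_sum_Ico_add w β hβ k' k n
  rw [hl']
  linarith

/-- Shift of degree interval across skipped variables: if `S_k ≤ u` and `S_{k'} ≤ u` are
equivalent Boolean functions (`k' < k`), every assignment satisfying `S_k ≤ u` satisfies
`S_k ≤ l`, and `l' = l + Σ_{i=k'}^{k−1} wᵢ`, then every 0-1 assignment satisfying
`S_{k'} ≤ u` also satisfies `S_{k'} ≤ l'`, where `S_j = Σ_{i≥j} wᵢ bᵢ`. -/
theorem stmt15 (n k k' : ℕ) (hk : k' < k) (w : ℕ → ℕ) (l u l' : ℤ)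
    (hl' : l' = l + ∑ i ∈ Finset.Ico k' k, (w i : ℤ))
    (hequiv : ∀ β : ℕ → ℕ, (∀ i, β i ≤ 1) →
      (((∑ i ∈ Finset.Icc k n, w i * β i : ℕ) : ℤ) ≤ u ↔
        ((∑ i ∈ Finset.Icc k' n, w i * β i : ℕ) : ℤ) ≤ u))
    (hdeg : ∀ β : ℕ → ℕ, (∀ i, β i ≤ 1) →
      ((∑ i ∈ Finset.Icc k n, w i * β i : ℕ) : ℤ) ≤ u →
      ((∑ i ∈ Finset.Icc k n, w i * β i : ℕ) : ℤ) ≤ l) :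
    ∀ β : ℕ → ℕ, (∀ i, β i ≤ 1) →
      ((∑ i ∈ Finset.Icc k' n, w i * β i : ℕ) : ℤ) ≤ u →
      ((∑ i ∈ Finset.Icc k' n, w i * β i : ℕ) : ℤ) ≤ l' :=
  stmt15_general n k k' w l u l' hl' hequiv hdeg
end

section
/- MDD degree-interval combination: let X_k be a nonempty finite set of indices with the at-most-one constraint Σ_{i∈X_k} b_i ≤ 1, and suppose {[l_i,u_i] : i ∈ X_k} ∪ {[l_e,u_e]} are degree intervals for T = Σ_{j>k} Σ_{i∈X_j} w_i b_i. Then [max({l_i + w_i : i ∈ X_k} ∪ {l_e}), min({u_i + w_i : i ∈ X_k} ∪ {u_e})] is a degree interval for S = Σ_{i∈X_k} w_i b_i + T, over all 0-1 assignments satisfying the at-most-one constraint. -/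
/-!
Under the at-most-one constraint the block `Σ_{i∈X_k} w_i b_i` is either `0` or a single
weight `w_i`, so `S` is `T` shifted by that constant. A degree interval for `T` shifted by
`w_i` is a degree interval for `T + w_i`, and any subinterval of a degree interval is again
one; the combined interval lies inside every shifted interval, whichever case occurs.
-/

/-- The degree-interval property at a single value `t` of the term; the paper's notion is this
property at every assignment satisfying the side constraints. -/
def IsDegreeInterval (t a c : ℤ) : Prop :=
  ∀ A : ℤ, a ≤ A → A ≤ c → (t ≤ A ↔ t ≤ c)

namespace IsDegreeInterval

variable {t a c : ℤ}

theorem mono {a' c' : ℤ} (h : IsDegreeInterval t a c) (ha : a ≤ a') (hc : c' ≤ c) :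
    IsDegreeInterval t a' c' := fun A hA hA' =>
  (h A (ha.trans hA) (hA'.trans hc)).trans (h c' (ha.trans (hA.trans hA')) hc).symm

theorem add_const (h : IsDegreeInterval t a c) (w : ℤ) :
    IsDegreeInterval (t + w) (a + w) (c + w) := fun A hA hA' => by
  have := h (A - w) (by omega) (by omega)
  omega

end IsDegreeInterval

theorem Finset.sum_mul_eq_zero_or_exists_of_sum_le_one {ι : Type*} {s : Finset ι}
    (w β : ι → ℕ) (h : ∑ i ∈ s, β i ≤ 1) :
    ∑ i ∈ s, w i * β i = 0 ∨ ∃ i ∈ s, ∑ j ∈ s, w j * β j = w i := by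
  classical
  by_cases! hsupp : ∃ i ∈ s, β i ≠ 0
  · obtain ⟨i, hi, hβi⟩ := hsupp
    have huniq := Finset.sum_le_one_iff.mp h
    refine .inr ⟨i, hi, ?_⟩
    rw [Finset.sum_eq_single_of_mem i hi fun j hj hji => ?_, (huniq i i hi hi hβi hβi).2, mul_one]
    by_contra hne
    exact hji (huniq j i hj hi (right_ne_zero_of_mul hne) hβi).1
  · exact .inl (Finset.sum_eq_zero fun i hi => by rw [hsupp i hi, mul_zero])

theorem stmt17_general {ι : Type*} (X : ℕ → Finset ι) (k m : ℕ) (hX : (X k).Nonempty)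
    (w : ι → ℕ) (lI uI : ι → ℤ) (le ue : ℤ)
    (hI : ∀ i ∈ X k, ∀ A : ℤ, lI i ≤ A → A ≤ uI i →
      ∀ β : ι → ℕ, (∀ j, β j ≤ 1) → (∑ i ∈ X k, β i ≤ 1) →
      (((∑ j ∈ Finset.Icc (k+1) m, ∑ i ∈ X j, w i * β i : ℕ) : ℤ) ≤ A ↔
        ((∑ j ∈ Finset.Icc (k+1) m, ∑ i ∈ X j, w i * β i : ℕ) : ℤ) ≤ uI i))
    (hE : ∀ A : ℤ, le ≤ A → A ≤ ue →
      ∀ β : ι → ℕ, (∀ j, β j ≤ 1) → (∑ i ∈ X k, β i ≤ 1) →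
      (((∑ j ∈ Finset.Icc (k+1) m, ∑ i ∈ X j, w i * β i : ℕ) : ℤ) ≤ A ↔
        ((∑ j ∈ Finset.Icc (k+1) m, ∑ i ∈ X j, w i * β i : ℕ) : ℤ) ≤ ue)) :
    ∀ A : ℤ,
      max ((X k).sup' hX fun i => lI i + (w i : ℤ)) le ≤ A →
      A ≤ min ((X k).inf' hX fun i => uI i + (w i : ℤ)) ue →
      ∀ β : ι → ℕ, (∀ j, β j ≤ 1) → (∑ i ∈ X k, β i ≤ 1) →
      ((((∑ i ∈ X k, w i * β i) + ∑ j ∈ Finset.Icc (k+1) m, ∑ i ∈ X j, w i * β i : ℕ) : ℤ) ≤ A ↔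
        (((∑ i ∈ X k, w i * β i) + ∑ j ∈ Finset.Icc (k+1) m, ∑ i ∈ X j, w i * β i : ℕ) : ℤ) ≤
          min ((X k).inf' hX fun i => uI i + (w i : ℤ)) ue) := by
  intro A hAl hAu β hβ hsum
  refine (?_ : IsDegreeInterval _ _ _) A hAl hAu
  rcases Finset.sum_mul_eq_zero_or_exists_of_sum_le_one w β hsum with hzero | ⟨i, hi, hsingle⟩
  · rw [hzero, zero_add]
    exact IsDegreeInterval.mono (fun A h h' => hE A h h' β hβ hsum)
      (le_max_right _ _) (min_le_right _ _)
  · rw [hsingle, add_comm, Nat.cast_add]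
    exact (IsDegreeInterval.add_const (fun A h h' => hI i hi A h h' β hβ hsum) _).mono
      ((Finset.le_sup' (fun i => lI i + (w i : ℤ)) hi).trans (le_max_left _ _))
      ((min_le_left _ _).trans (Finset.inf'_le (fun i => uI i + (w i : ℤ)) hi))

/-- MDD degree-interval combination: with the at-most-one side constraint
`Σ_{i∈X_k} b_i ≤ 1`, if `{[l_i,u_i] : i ∈ X_k} ∪ {[l_e,u_e]}` are degree intervals for
`T = Σ_{j>k} Σ_{i∈X_j} w_i b_i`, then
`[max({l_i + w_i} ∪ {l_e}), min({u_i + w_i} ∪ {u_e})]` is a degree interval for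
`S = Σ_{i∈X_k} w_i b_i + T` over assignments satisfying the at-most-one constraint. -/
theorem stmt17 {ι : Type*} (X : ℕ → Finset ι) (k m : ℕ) (hX : (X k).Nonempty)
    (w : ι → ℕ) (lI uI : ι → ℤ) (le ue : ℤ)
    (hIne : ∀ i ∈ X k, lI i ≤ uI i) (hEne : le ≤ ue)
    (hI : ∀ i ∈ X k, ∀ A : ℤ, lI i ≤ A → A ≤ uI i →
      ∀ β : ι → ℕ, (∀ j, β j ≤ 1) → (∑ i ∈ X k, β i ≤ 1) →
      (((∑ j ∈ Finset.Icc (k+1) m, ∑ i ∈ X j, w i * β i : ℕ) : ℤ) ≤ A ↔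
        ((∑ j ∈ Finset.Icc (k+1) m, ∑ i ∈ X j, w i * β i : ℕ) : ℤ) ≤ uI i))
    (hE : ∀ A : ℤ, le ≤ A → A ≤ ue →
      ∀ β : ι → ℕ, (∀ j, β j ≤ 1) → (∑ i ∈ X k, β i ≤ 1) →
      (((∑ j ∈ Finset.Icc (k+1) m, ∑ i ∈ X j, w i * β i : ℕ) : ℤ) ≤ A ↔
        ((∑ j ∈ Finset.Icc (k+1) m, ∑ i ∈ X j, w i * β i : ℕ) : ℤ) ≤ ue)) :
    ∀ A : ℤ,
      max ((X k).sup' hX fun i => lI i + (w i : ℤ)) le ≤ A →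
      A ≤ min ((X k).inf' hX fun i => uI i + (w i : ℤ)) ue →
      ∀ β : ι → ℕ, (∀ j, β j ≤ 1) → (∑ i ∈ X k, β i ≤ 1) →
      ((((∑ i ∈ X k, w i * β i) + ∑ j ∈ Finset.Icc (k+1) m, ∑ i ∈ X j, w i * β i : ℕ) : ℤ) ≤ A ↔
        (((∑ i ∈ X k, w i * β i) + ∑ j ∈ Finset.Icc (k+1) m, ∑ i ∈ X j, w i * β i : ℕ) : ℤ) ≤
          min ((X k).inf' hX fun i => uI i + (w i : ℤ)) ue) :=
  stmt17_general X k m hX w lI uI le ue hI hE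
end
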